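/- (Riesz analytic continuation of a ↦ ∫_0^∞ x^a φ(x) dx.) Let φ ∈ 𝓢(ℝ,ℂ) and k ∈ ℕ, k ≥ 1. Then: (i) for every a ∈ ℂ with Re a > −1, ∫_{x ∈ (0,∞)} x^a φ(x) dx = ((−1)^k / ((a+1)(a+2)⋯(a+k))) · ∫_{x ∈ (0,∞)} x^{a+k} φ^{(k)}(x) dx; (ii) the function G(a) := ((−1)^k / ((a+1)⋯(a+k))) · ∫_{x ∈ (0,∞)} x^{a+k} φ^{(k)}(x) dx is complex-differentiable on {a : Re a > −k−1} \ {−1, −2, …, −k}; (iii) (a + k)·G(a) → φ^{(k-1)}(0)/(k−1)! as a → −k, i.e. G has at most a simple pole at a = −k with residue φ^{(k-1)}(0)/(k−1)!. -/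

import Mathlib

/-!
Integration by parts against `x ^ (a + 1)` gives `∫₀^∞ x^(a+1) φ' = -(a+1) ∫₀^∞ x^a φ` for
`Re a > -1`: the boundary terms vanish because `x^(a+1) φ(x) → 0` at both ends. Iterating gives
the formula. Its right-hand side is a Mellin transform of the Schwartz function `φ⁽ᵏ⁾`, hence
holomorphic on `Re a > -k - 1`. At `a = -k` the factor `a + k` of the product cancels, and the
remaining integral is `∫₀^∞ φ⁽ᵏ⁾ = -φ⁽ᵏ⁻¹⁾(0)`.
-/

open MeasureTheory Complex Filter Asymptotics Set Topology

namespace SchwartzMap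

variable {E : Type*} [NormedAddCommGroup E] [NormedSpace ℝ E]

theorem isBigO_atTop_rpow (f : 𝓢(ℝ, E)) (t : ℝ) : (f : ℝ → E) =O[atTop] (· ^ t) := by
  refine ((f.isBigO_cocompact_rpow t).mono atTop_le_cocompact).congr' EventuallyEq.rfl ?_
  filter_upwards [eventually_gt_atTop 0] with x hx
  simp [Real.norm_of_nonneg hx.le]

-- The exponent `-0` is the shape `(· ^ (-b))` that the Mellin transform API expects.
theorem isBigO_nhdsGT_zero_rpow_neg_zero (f : 𝓢(ℝ, E)) :
    (f : ℝ → E) =O[𝓝[>] 0] (· ^ (-(0 : ℝ))) := by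
  refine ((f.continuous.tendsto 0).mono_left nhdsWithin_le_nhds).isBigO_one ℝ
    |>.trans_eventuallyEq ?_
  filter_upwards [self_mem_nhdsWithin] with x (hx : 0 < x)
  simp

theorem integral_Ioi_deriv [CompleteSpace E] (f : 𝓢(ℝ, E)) (a : ℝ) :
    ∫ x in Ioi a, deriv f x = -f a := by
  simpa using integral_Ioi_of_hasDerivAt_of_tendsto f.continuous.continuousWithinAt
    (fun x _ => f.hasDerivAt x) (derivCLM ℝ E f).integrable.integrableOn
    (f.tendsto_cocompact.mono_left atTop_le_cocompact)

theorem iteratedDeriv_eq_iterate_derivCLM (f : 𝓢(ℝ, E)) (k : ℕ) :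
    iteratedDeriv k f = ⇑((derivCLM ℝ E)^[k] f) := by
  induction k generalizing f with
  | zero => simp
  | succ k ih => rw [iteratedDeriv_succ', Function.iterate_succ_apply, ← ih]; rfl

theorem integral_Ioi_iteratedDeriv_succ [CompleteSpace E] (f : 𝓢(ℝ, E)) (k : ℕ) (a : ℝ) :
    ∫ x in Ioi a, iteratedDeriv (k + 1) f x = -iteratedDeriv k f a := by
  rw [iteratedDeriv_succ, iteratedDeriv_eq_iterate_derivCLM]
  exact integral_Ioi_deriv _ a

variable (f : 𝓢(ℝ, ℂ))

theorem mellinConvergent {s : ℂ} (hs : 0 < s.re) : MellinConvergent f s :=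
  mellinConvergent_of_isBigO_rpow (f.continuous.locallyIntegrable.locallyIntegrableOn _)
    (f.isBigO_atTop_rpow (-(s.re + 1))) (by linarith) f.isBigO_nhdsGT_zero_rpow_neg_zero hs

theorem differentiableAt_mellin {s : ℂ} (hs : 0 < s.re) : DifferentiableAt ℂ (mellin f) s :=
  mellin_differentiableAt_of_isBigO_rpow (f.continuous.locallyIntegrable.locallyIntegrableOn _)
    (f.isBigO_atTop_rpow (-(s.re + 1))) (by linarith) f.isBigO_nhdsGT_zero_rpow_neg_zero hs

theorem integral_Ioi_cpow_mul_eq_mellin (a : ℂ) :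
    ∫ x in Ioi (0 : ℝ), (x : ℂ) ^ a * f x = mellin f (a + 1) := by
  simp [mellin]

theorem integrableOn_Ioi_cpow_mul {a : ℂ} (ha : -1 < a.re) :
    IntegrableOn (fun x : ℝ => (x : ℂ) ^ a * f x) (Ioi 0) := by
  simpa [MellinConvergent] using f.mellinConvergent (s := a + 1) (by simp only [add_re, one_re]; linarith)

theorem differentiableAt_integral_Ioi_cpow_mul {a : ℂ} (ha : -1 < a.re) :
    DifferentiableAt ℂ (fun w : ℂ => ∫ x in Ioi (0 : ℝ), (x : ℂ) ^ w * f x) a := by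
  simp only [integral_Ioi_cpow_mul_eq_mellin]
  exact (f.differentiableAt_mellin (by simp only [add_re, one_re]; linarith)).comp a (by fun_prop)

theorem tendsto_cpow_mul_atTop (s : ℂ) :
    Tendsto (fun x : ℝ => (x : ℂ) ^ s * f x) atTop (𝓝 0) := by
  have hcpow : (fun x : ℝ => (x : ℂ) ^ s) =O[atTop] (· ^ s.re) := by
    refine IsBigO.of_bound 1 ?_
    filter_upwards [eventually_gt_atTop 0] with x hx
    rw [one_mul, norm_cpow_eq_rpow_re_of_pos hx, Real.norm_of_nonneg (Real.rpow_nonneg hx.le _)]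
  refine (hcpow.mul (f.isBigO_atTop_rpow (-(s.re + 1)))).trans_tendsto ?_
  refine (tendsto_rpow_neg_atTop one_pos).congr' ?_
  filter_upwards [eventually_gt_atTop 0] with x hx
  rw [← Real.rpow_add hx]
  ring_nf

theorem tendsto_cpow_mul_nhdsGT_zero {s : ℂ} (hs : 0 < s.re) :
    Tendsto (fun x : ℝ => (x : ℂ) ^ s * f x) (𝓝[>] 0) (𝓝 0) := by
  have hcpow : Tendsto (fun x : ℝ => (x : ℂ) ^ s) (𝓝[>] 0) (𝓝 0) := by
    refine squeeze_zero_norm' ?_ ((Real.continuousAt_rpow_const 0 s.re (Or.inr hs.le)).tendsto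
      |>.mono_left nhdsWithin_le_nhds |>.trans_eq (congrArg 𝓝 (Real.zero_rpow hs.ne')))
    filter_upwards [self_mem_nhdsWithin] with x (hx : 0 < x)
    rw [norm_cpow_eq_rpow_re_of_pos hx]
  simpa using hcpow.mul ((f.continuous.tendsto 0).mono_left nhdsWithin_le_nhds)

theorem integral_Ioi_cpow_add_one_mul_deriv {a : ℂ} (ha : -1 < a.re) :
    ∫ x in Ioi (0 : ℝ), (x : ℂ) ^ (a + 1) * deriv f x
      = -(a + 1) * ∫ x in Ioi (0 : ℝ), (x : ℂ) ^ a * f x := by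
  have ha' : 0 < (a + 1).re := by simp only [add_re, one_re]; linarith
  have hu (x : ℝ) (hx : x ∈ Ioi 0) :
      HasDerivAt (fun y : ℝ => (y : ℂ) ^ (a + 1)) ((a + 1) * (x : ℂ) ^ a) x := by
    simpa using hasDerivAt_ofReal_cpow_const (ne_of_gt hx) (ne_of_apply_ne re ha'.ne')
  have hu'v : IntegrableOn (fun x : ℝ => (a + 1) * (x : ℂ) ^ a * f x) (Ioi 0) := by
    simp_rw [mul_assoc]
    exact (f.integrableOn_Ioi_cpow_mul ha).const_mul (a + 1)
  have := integral_Ioi_mul_deriv_eq_deriv_mul hu (fun x _ => f.hasDerivAt x)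
    ((derivCLM ℝ ℂ f).integrableOn_Ioi_cpow_mul (a := a + 1) (by linarith)) hu'v
    (f.tendsto_cpow_mul_nhdsGT_zero ha') (f.tendsto_cpow_mul_atTop (a + 1))
  simp only [this, mul_assoc, integral_const_mul]
  ring

theorem integral_Ioi_cpow_add_mul_iteratedDeriv (k : ℕ) {a : ℂ} (ha : -1 < a.re) :
    ∫ x in Ioi (0 : ℝ), (x : ℂ) ^ (a + k) * iteratedDeriv k f x
      = (-1) ^ k * (∏ i ∈ Finset.range k, (a + i + 1)) * ∫ x in Ioi (0 : ℝ), (x : ℂ) ^ a * f x := by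
  induction k with
  | zero => simp
  | succ k ih =>
    have hre : -1 < (a + k).re := by simp only [add_re, natCast_re]; linarith [(k.cast_nonneg : (0 : ℝ) ≤ k)]
    have hstep := ((derivCLM ℝ ℂ)^[k] f).integral_Ioi_cpow_add_one_mul_deriv hre
    rw [← iteratedDeriv_eq_iterate_derivCLM, ← iteratedDeriv_succ] at hstep
    rw [Nat.cast_succ, ← add_assoc, hstep, ih, Finset.prod_range_succ, pow_succ]
    ring

theorem differentiableAt_integral_Ioi_cpow_add_mul_iteratedDeriv (k : ℕ) {a : ℂ}
    (ha : -(k : ℝ) - 1 < a.re) :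
    DifferentiableAt ℂ
      (fun w : ℂ => ∫ x in Ioi (0 : ℝ), (x : ℂ) ^ (w + k) * iteratedDeriv k f x) a := by
  have hre : -1 < (a + k).re := by simp only [add_re, natCast_re]; linarith
  rw [iteratedDeriv_eq_iterate_derivCLM]
  exact (((derivCLM ℝ ℂ)^[k] f).differentiableAt_integral_Ioi_cpow_mul hre).comp
    (f := fun w : ℂ => w + k) a (by fun_prop)

end SchwartzMap

section Pole

variable {𝕜 : Type*} [NormedField 𝕜]

theorem prod_range_neg_natCast_add (m : ℕ) :
    ∏ i ∈ Finset.range m, (-(m : 𝕜) + i) = (-1) ^ m * m.factorial := by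
  have h (i : ℕ) : -(m : 𝕜) + i = -1 * (m - i) := by ring
  simp_rw [h, Finset.prod_mul_distrib, Finset.prod_const, Finset.card_range,
    ← descPochhammer_eval_eq_prod_range, descPochhammer_eval_eq_descFactorial,
    Nat.descFactorial_self]

theorem prod_range_add_add_one_ne_zero {a : 𝕜} {k : ℕ}
    (ha : ∀ i ∈ Finset.range k, a ≠ -((i : 𝕜) + 1)) : ∏ i ∈ Finset.range k, (a + i + 1) ≠ 0 :=
  Finset.prod_ne_zero_iff.mpr fun i hi h => ha i hi (by linear_combination h)

theorem tendsto_mul_div_prod_range_nhdsNE [CharZero 𝕜] (c : 𝕜) (m : ℕ) :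
    Tendsto (fun w : 𝕜 => (w + (m + 1 : ℕ)) * (c / ∏ i ∈ Finset.range (m + 1), (w + i + 1)))
      (𝓝[≠] (-((m + 1 : ℕ) : 𝕜))) (𝓝 (c / ((-1) ^ m * m.factorial))) := by
  have hval : ∏ i ∈ Finset.range m, (-((m + 1 : ℕ) : 𝕜) + i + 1) = (-1) ^ m * m.factorial := by
    rw [← prod_range_neg_natCast_add]
    push_cast
    ring_nf
  have hcont : ContinuousAt (fun w : 𝕜 => c / ∏ i ∈ Finset.range m, (w + i + 1))
      (-((m + 1 : ℕ) : 𝕜)) :=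
    continuousAt_const.div (by fun_prop) (hval ▸ by simp [Nat.factorial_ne_zero])
  refine hval ▸ (hcont.tendsto.mono_left nhdsWithin_le_nhds).congr' ?_
  filter_upwards [self_mem_nhdsWithin] with w (hw : w ≠ _)
  have hw' : w + m + 1 ≠ 0 := fun h => hw (by push_cast; linear_combination h)
  rw [Finset.prod_range_succ, Nat.cast_succ, ← add_assoc]
  rw [mul_comm (∏ _ ∈ _, _), ← div_div, ← mul_div_assoc, mul_div_cancel₀ _ hw']

end Pole

/-- Riesz analytic continuation of `a ↦ ∫_0^∞ x^a φ(x) dx`: integration by parts formula,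
analyticity on `Re a > -k-1` away from `{-1,…,-k}`, and simple pole at `a = -k` with
residue `φ^{(k-1)}(0)/(k-1)!`. -/
theorem riesz_analytic_continuation (φ : SchwartzMap ℝ ℂ) (k : ℕ) (hk : 1 ≤ k) :
    (∀ a : ℂ, -1 < a.re →
      ∫ x in Set.Ioi (0 : ℝ), (x : ℂ) ^ a * φ x
        = ((-1) ^ k / ∏ i ∈ Finset.range k, (a + (i : ℂ) + 1)) *
          ∫ x in Set.Ioi (0 : ℝ), (x : ℂ) ^ (a + k) * iteratedDeriv k (fun y : ℝ => φ y) x) ∧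
    (∀ a : ℂ, -(k : ℝ) - 1 < a.re → (∀ i ∈ Finset.range k, a ≠ -((i : ℂ) + 1)) →
      DifferentiableAt ℂ
        (fun w : ℂ => ((-1) ^ k / ∏ i ∈ Finset.range k, (w + (i : ℂ) + 1)) *
          ∫ x in Set.Ioi (0 : ℝ), (x : ℂ) ^ (w + k) * iteratedDeriv k (fun y : ℝ => φ y) x)
        a) ∧
    Filter.Tendsto
      (fun w : ℂ => (w + (k : ℂ)) *
        (((-1) ^ k / ∏ i ∈ Finset.range k, (w + (i : ℂ) + 1)) *
          ∫ x in Set.Ioi (0 : ℝ), (x : ℂ) ^ (w + k) * iteratedDeriv k (fun y : ℝ => φ y) x))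
      (nhdsWithin (-(k : ℂ)) {-(k : ℂ)}ᶜ)
      (nhds (iteratedDeriv (k - 1) (fun y : ℝ => φ y) 0 / ((k - 1).factorial : ℂ))) := by
  obtain ⟨m, rfl⟩ : ∃ m, k = m + 1 := ⟨k - 1, by omega⟩
  refine ⟨fun a ha => ?_, fun a ha hroots => ?_, ?_⟩
  · have hne : ∏ i ∈ Finset.range (m + 1), (a + i + 1) ≠ 0 :=
      prod_range_add_add_one_ne_zero fun i _ h => by
        have hre := congrArg re h
        simp only [neg_add_rev, add_re, neg_re, one_re, natCast_re] at hre
        linarith [(i.cast_nonneg : (0 : ℝ) ≤ i)]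
    rw [φ.integral_Ioi_cpow_add_mul_iteratedDeriv _ ha]
    field_simp
    simp [← pow_mul]
  · refine DifferentiableAt.mul ?_ (φ.differentiableAt_integral_Ioi_cpow_add_mul_iteratedDeriv _ ha)
    exact (differentiableAt_const _).div (by fun_prop) (prod_range_add_add_one_ne_zero hroots)
  · have hF := (φ.differentiableAt_integral_Ioi_cpow_add_mul_iteratedDeriv (m + 1)
      (a := -((m + 1 : ℕ) : ℂ)) (by simp only [neg_re, natCast_re]; linarith)).continuousAt
    have hF0 : ∫ x in Ioi (0 : ℝ), (x : ℂ) ^ (-((m + 1 : ℕ) : ℂ) + (m + 1 : ℕ)) *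
        iteratedDeriv (m + 1) φ x = -iteratedDeriv m φ 0 := by
      simp only [neg_add_cancel, cpow_zero, one_mul, SchwartzMap.integral_Ioi_iteratedDeriv_succ]
    convert (tendsto_mul_div_prod_range_nhdsNE ((-1) ^ (m + 1) : ℂ) m).mul
      (hF.tendsto.mono_left nhdsWithin_le_nhds) using 2
    · ring
    · rw [hF0, Nat.add_sub_cancel, pow_succ]
      field_simp
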